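/- Under the projector hypotheses, the 4-tensor T = ρ[((n−2)(n−3)/2)(g⊙g) + (P⊙P) − (n−3)(g⊙P)] satisfies, for all indices μ, κ, the partial-trace identity (T·T)_{μν}{}^ν{}_κ = −ρ²[2(n−1)(n−2)(n−3)² g_{μκ} + 4(n−1)(n−3) P_{μκ}]. -/

import Mathlib

open Finset

variable {ι : Type*} [Fintype ι] [DecidableEq ι]

/-- Kulkarni–Nomizu product of two 2-tensors:
`(A⊙B)_{μνλκ} = A_{μλ}B_{νκ} − A_{νλ}B_{μκ} − A_{μκ}B_{νλ} + A_{νκ}B_{μλ}`. -/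
def KN (A B : ι → ι → ℝ) : ι → ι → ι → ι → ℝ :=
  fun μ ν l κ => A μ l * B ν κ - A ν l * B μ κ - A μ κ * B ν l + A ν κ * B μ l

/-- Contraction of two 2-tensors via the inverse metric:
`(A·B)_{μκ} = Σ_{ν,λ} A_{μν}(Ḡ⁻¹)_{νλ}B_{λκ}`. -/
def dot2 (Ginv : ι → ι → ℝ) (A B : ι → ι → ℝ) : ι → ι → ℝ :=
  fun μ κ => ∑ ν, ∑ l, A μ ν * Ginv ν l * B l κ

/-- Contraction of two 4-tensors via the inverse metric:
`(R·S)_{μνλκ} = Σ R_{μνστ}(Ḡ⁻¹)_{σσ'}(Ḡ⁻¹)_{ττ'}S_{σ'τ'λκ}`. -/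
def dot4 (Ginv : ι → ι → ℝ) (R S : ι → ι → ι → ι → ℝ) : ι → ι → ι → ι → ℝ :=
  fun μ ν l κ => ∑ σ, ∑ τ, ∑ σ', ∑ τ', R μ ν σ τ * Ginv σ σ' * Ginv τ τ' * S σ' τ' l κ

/-- Trace of a 2-tensor: `tr A = Σ_{μ,ν} (Ḡ⁻¹)_{μν}A_{νμ}`. -/
def tr2 (Ginv : ι → ι → ℝ) (A : ι → ι → ℝ) : ℝ :=
  ∑ μ, ∑ ν, Ginv μ ν * A ν μ

/-- Partial trace of a 4-tensor: `R_{μν}{}^ν{}_κ = Σ_{ν,ν'} (Ḡ⁻¹)_{νν'} R_{μνν'κ}`. -/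
def ptr4 (Ginv : ι → ι → ℝ) (R : ι → ι → ι → ι → ℝ) : ι → ι → ℝ :=
  fun μ κ => ∑ ν, ∑ ν', Ginv ν ν' * R μ ν ν' κ

/-- Full trace of a 4-tensor: `R_{μν}{}^{μν} = Σ (Ḡ⁻¹)_{μμ'}(Ḡ⁻¹)_{νν'} R_{μνμ'ν'}`. -/
def ftr4 (Ginv : ι → ι → ℝ) (R : ι → ι → ι → ι → ℝ) : ℝ :=
  ∑ μ, ∑ μ', ∑ ν, ∑ ν', Ginv μ μ' * Ginv ν ν' * R μ ν μ' ν'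

/-- The curvature 4-tensor of a generalized Schwarzschild–Tangherlini geometry,
`T = ρ[((n−2)(n−3)/2)(g⊙g) + (P⊙P) − (n−3)(g⊙P)]`. -/
noncomputable def Tgst (n : ℕ) (ρ : ℝ) (g P : ι → ι → ℝ) : ι → ι → ι → ι → ℝ :=
  fun μ ν l κ => ρ * (((n : ℝ) - 2) * ((n : ℝ) - 3) / 2 * KN g g μ ν l κ
    + KN P P μ ν l κ - ((n : ℝ) - 3) * KN g P μ ν l κ)

/-!
Writing the Kulkarni–Nomizu product as an antisymmetrised, symmetrised outer product, and using that
contraction of outer products multiplies the factors, gives `(A⊙B)·(C⊙D) = 2(AC⊙BD + AD⊙BC)` for any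
contraction; for symmetric `Ḡ⁻¹` the partial trace of `A⊙B` is `AB + BA − (tr A)B − (tr B)A`.
Expanding `T·T` bilinearly, the relations `g·g = g`, `P·P = P`, `g·P = P·g = 0`, `tr g = 2`,
`tr P = n − 2` reduce the claim to a polynomial identity in `n`.
-/

theorem inv_symm_of_symm {G Ginv : ι → ι → ℝ} (hG : ∀ μ ν, G μ ν = G ν μ)
    (hinv : ∀ μ l, ∑ ν, G μ ν * Ginv ν l = if μ = l then (1 : ℝ) else 0) (μ ν : ι) :
    Ginv μ ν = Ginv ν μ := by
  have hmul : Matrix.of G * Matrix.of Ginv = 1 := by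
    ext μ l
    simpa [Matrix.mul_apply, Matrix.one_apply] using hinv μ l
  have hsymm : (Matrix.of G)⁻¹.IsSymm := (Matrix.IsSymm.ext fun μ ν => hG ν μ).inv
  rw [Matrix.inv_eq_right_inv hmul] at hsymm
  exact hsymm.apply ν μ

section Contraction

omit [DecidableEq ι]

theorem dot2_swap {G A B : ι → ι → ℝ} (hG : ∀ μ ν, G μ ν = G ν μ) (hA : ∀ μ ν, A μ ν = A ν μ)
    (hB : ∀ μ ν, B μ ν = B ν μ) (μ κ : ι) : dot2 G A B μ κ = dot2 G B A κ μ := by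
  unfold dot2
  rw [Finset.sum_comm]
  refine Finset.sum_congr rfl fun ν _ => Finset.sum_congr rfl fun l _ => ?_
  rw [hA, hB, hG]
  ring

variable (G : ι → ι → ℝ)

def dot4ₗ : (ι → ι → ι → ι → ℝ) →ₗ[ℝ] (ι → ι → ι → ι → ℝ) →ₗ[ℝ] (ι → ι → ι → ι → ℝ) :=
  LinearMap.mk₂ ℝ (dot4 G)
    (fun R R' S => by funext μ ν l κ; simp [dot4, add_mul, Finset.sum_add_distrib])
    (fun c R S => by funext μ ν l κ; simp [dot4, Finset.mul_sum, mul_assoc])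
    (fun R S S' => by funext μ ν l κ; simp [dot4, mul_add, Finset.sum_add_distrib])
    (fun c R S => by funext μ ν l κ; simp [dot4, Finset.mul_sum, mul_left_comm c])

theorem dot4ₗ_apply (R S : ι → ι → ι → ι → ℝ) : dot4ₗ G R S = dot4 G R S := rfl

def ptr4ₗ : (ι → ι → ι → ι → ℝ) →ₗ[ℝ] (ι → ι → ℝ) where
  toFun := ptr4 G
  map_add' R S := by funext μ κ; simp [ptr4, mul_add, Finset.sum_add_distrib]
  map_smul' c R := by funext μ κ; simp [ptr4, Finset.mul_sum, mul_left_comm c]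

theorem ptr4ₗ_apply (R : ι → ι → ι → ι → ℝ) : ptr4ₗ G R = ptr4 G R := rfl

end Contraction

section KulkarniNomizu

omit [DecidableEq ι]
variable (G : ι → ι → ℝ)

omit [Fintype ι] in
@[simp]
theorem KN_zero_left (B : ι → ι → ℝ) : KN 0 B = 0 := by
  funext μ ν l κ; simp [KN]

omit [Fintype ι] in
@[simp]
theorem KN_zero_right (A : ι → ι → ℝ) : KN A 0 = 0 := by
  funext μ ν l κ; simp [KN]

def outer (A B : ι → ι → ℝ) : ι → ι → ι → ι → ℝ := fun μ ν l κ => A μ l * B ν κ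

theorem dot4_outer_outer (A B C D : ι → ι → ℝ) :
    dot4 G (outer A B) (outer C D) = outer (dot2 G A C) (dot2 G B D) := by
  funext μ ν l κ
  simp only [dot4, dot2, outer, Finset.sum_mul_sum]
  exact Finset.sum_congr rfl fun σ _ => Finset.sum_congr rfl fun τ _ =>
    Finset.sum_congr rfl fun σ' _ => Finset.sum_congr rfl fun τ' _ => by ring

-- `KN A B` is the antisymmetrisation of `outer A B + outer B A` in its first pair of slots,
-- and also in its last pair.
theorem dot4_KN_left (A B : ι → ι → ℝ) (R : ι → ι → ι → ι → ℝ) (μ ν l κ : ι) :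
    dot4 G (KN A B) R μ ν l κ =
      dot4 G (outer A B + outer B A) R μ ν l κ - dot4 G (outer A B + outer B A) R ν μ l κ := by
  simp only [dot4, ← Finset.sum_sub_distrib]
  refine Finset.sum_congr rfl fun σ _ => Finset.sum_congr rfl fun τ _ =>
    Finset.sum_congr rfl fun σ' _ => Finset.sum_congr rfl fun τ' _ => ?_
  simp only [KN, outer, Pi.add_apply]
  ring

theorem dot4_KN_right (C D : ι → ι → ℝ) (R : ι → ι → ι → ι → ℝ) (μ ν l κ : ι) :
    dot4 G R (KN C D) μ ν l κ =
      dot4 G R (outer C D + outer D C) μ ν l κ - dot4 G R (outer C D + outer D C) μ ν κ l := by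
  simp only [dot4, ← Finset.sum_sub_distrib]
  refine Finset.sum_congr rfl fun σ _ => Finset.sum_congr rfl fun τ _ =>
    Finset.sum_congr rfl fun σ' _ => Finset.sum_congr rfl fun τ' _ => ?_
  simp only [KN, outer, Pi.add_apply]
  ring

theorem dot4_KN_KN (A B C D : ι → ι → ℝ) :
    dot4 G (KN A B) (KN C D) =
      (2 : ℝ) • (KN (dot2 G A C) (dot2 G B D) + KN (dot2 G A D) (dot2 G B C)) := by
  funext μ ν l κ
  simp only [dot4_KN_left, dot4_KN_right, ← dot4ₗ_apply, map_add, LinearMap.add_apply]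
  simp only [dot4ₗ_apply, dot4_outer_outer, Pi.add_apply, Pi.smul_apply, smul_eq_mul, outer, KN]
  ring

theorem ptr4_KN (hG : ∀ μ ν, G μ ν = G ν μ) (A B : ι → ι → ℝ) (μ κ : ι) :
    ptr4 G (KN A B) μ κ =
      dot2 G A B μ κ + dot2 G B A μ κ - tr2 G A * B μ κ - tr2 G B * A μ κ := by
  have hdot2 : ∀ X Y : ι → ι → ℝ, ∑ ν, ∑ ν', G ν ν' * (X μ ν' * Y ν κ) = dot2 G X Y μ κ := by
    intro X Y
    rw [dot2, Finset.sum_comm]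
    exact Finset.sum_congr rfl fun ν' _ => Finset.sum_congr rfl fun ν _ => by rw [hG]; ring
  have htr2 : ∀ X : ι → ι → ℝ, ∑ ν, ∑ ν', G ν ν' * X ν ν' = tr2 G X := by
    intro X
    rw [tr2, Finset.sum_comm]
    exact Finset.sum_congr rfl fun ν' _ => Finset.sum_congr rfl fun ν _ => by rw [hG]
  have hterm : ∀ ν ν', G ν ν' * KN A B μ ν ν' κ =
      G ν ν' * (A μ ν' * B ν κ) + G ν ν' * (B μ ν' * A ν κ)
        - G ν ν' * A ν ν' * B μ κ - G ν ν' * B ν ν' * A μ κ := by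
    intro ν ν'; simp only [KN]; ring
  simp only [ptr4, hterm, Finset.sum_add_distrib, Finset.sum_sub_distrib, ← Finset.sum_mul,
    hdot2, htr2]

end KulkarniNomizu

omit [DecidableEq ι] in
theorem ptr4_dot4_Tgst {G g P : ι → ι → ℝ} (n : ℕ) (ρ : ℝ) (hG : ∀ μ ν, G μ ν = G ν μ)
    (hgg : dot2 G g g = g) (hPP : dot2 G P P = P) (hgP : dot2 G g P = 0)
    (hPg : dot2 G P g = 0) (htrg : tr2 G g = 2) (htrP : tr2 G P = (n : ℝ) - 2) (μ κ : ι) :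
    ptr4 G (dot4 G (Tgst n ρ g P) (Tgst n ρ g P)) μ κ =
      -(ρ ^ 2) * (2 * ((n : ℝ) - 1) * ((n : ℝ) - 2) * ((n : ℝ) - 3) ^ 2 * g μ κ
        + 4 * ((n : ℝ) - 1) * ((n : ℝ) - 3) * P μ κ) := by
  have hT : Tgst n ρ g P =
      ρ • ((((n : ℝ) - 2) * ((n : ℝ) - 3) / 2) • KN g g + KN P P - ((n : ℝ) - 3) • KN g P) := by
    funext μ ν l κ; simp [Tgst]
  rw [hT, ← dot4ₗ_apply, ← ptr4ₗ_apply]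
  simp only [map_add, map_sub, map_smul, LinearMap.add_apply, LinearMap.sub_apply,
    LinearMap.smul_apply, dot4ₗ_apply, dot4_KN_KN, hgg, hPP, hgP, hPg, KN_zero_left,
    KN_zero_right, map_zero]
  simp only [ptr4ₗ_apply, Pi.add_apply, Pi.sub_apply, Pi.smul_apply, smul_eq_mul, ptr4_KN G hG,
    hgg, hPP, hgP, hPg, Pi.zero_apply, htrg, htrP]
  ring

theorem Tgst_dot_Tgst_partial_trace_general {n : ℕ}
    (Gbar Ginv g P : ι → ι → ℝ) (ρ : ℝ)
    (hGsymm : ∀ μ ν, Gbar μ ν = Gbar ν μ)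
    (hGinv : ∀ μ l, ∑ ν, Gbar μ ν * Ginv ν l = if μ = l then (1 : ℝ) else 0)
    (hgsymm : ∀ μ ν, g μ ν = g ν μ) (hPsymm : ∀ μ ν, P μ ν = P ν μ)
    (hgg : ∀ μ ν, dot2 Ginv g g μ ν = g μ ν)
    (hPP : ∀ μ ν, dot2 Ginv P P μ ν = P μ ν)
    (hgP : ∀ μ ν, dot2 Ginv g P μ ν = 0)
    (htrg : tr2 Ginv g = 2)
    (htrP : tr2 Ginv P = (n : ℝ) - 2)
    :
    ∀ μ κ,
      ptr4 Ginv (dot4 Ginv (Tgst n ρ g P) (Tgst n ρ g P)) μ κ =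
        -(ρ ^ 2) * (2 * ((n : ℝ) - 1) * ((n : ℝ) - 2) * ((n : ℝ) - 3) ^ 2 * g μ κ
          + 4 * ((n : ℝ) - 1) * ((n : ℝ) - 3) * P μ κ) := by
  have hGinv_symm := inv_symm_of_symm hGsymm hGinv
  have hPg : dot2 Ginv P g = 0 := by
    funext μ ν
    rw [dot2_swap hGinv_symm hPsymm hgsymm, hgP]
    rfl
  exact ptr4_dot4_Tgst n ρ hGinv_symm (funext₂ hgg) (funext₂ hPP) (funext₂ hgP) hPg htrg htrP

/-- Under the projector hypotheses,
`(T·T)_{μν}{}^ν{}_κ = −ρ²[2(n−1)(n−2)(n−3)² g_{μκ} + 4(n−1)(n−3) P_{μκ}]`. -/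
theorem Tgst_dot_Tgst_partial_trace {n : ℕ} (hn : 4 ≤ n) (hcard : Fintype.card ι = n)
    (Gbar Ginv g P : ι → ι → ℝ) (ρ : ℝ)
    (hGsymm : ∀ μ ν, Gbar μ ν = Gbar ν μ)
    (hGinv : ∀ μ l, ∑ ν, Gbar μ ν * Ginv ν l = if μ = l then (1 : ℝ) else 0)
    (hsplit : ∀ μ ν, Gbar μ ν = g μ ν + P μ ν)
    (hgsymm : ∀ μ ν, g μ ν = g ν μ) (hPsymm : ∀ μ ν, P μ ν = P ν μ)
    (hgg : ∀ μ ν, dot2 Ginv g g μ ν = g μ ν)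
    (hPP : ∀ μ ν, dot2 Ginv P P μ ν = P μ ν)
    (hgP : ∀ μ ν, dot2 Ginv g P μ ν = 0)
    (htrg : tr2 Ginv g = 2)
    (htrP : tr2 Ginv P = (n : ℝ) - 2)
    :
    ∀ μ κ,
      ptr4 Ginv (dot4 Ginv (Tgst n ρ g P) (Tgst n ρ g P)) μ κ =
        -(ρ ^ 2) * (2 * ((n : ℝ) - 1) * ((n : ℝ) - 2) * ((n : ℝ) - 3) ^ 2 * g μ κ
          + 4 * ((n : ℝ) - 1) * ((n : ℝ) - 3) * P μ κ) :=
  Tgst_dot_Tgst_partial_trace_general Gbar Ginv g P ρ hGsymm hGinv hgsymm hPsymm hgg hPP hgP htrg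
    htrP
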